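/- Lemma E.5: Consider the recursively defined kernels with identity skip connection: K^(0)_{ij} given, b^(0)_i = 0, and for h ≥ 1, with (u,v) ∼ N(0, [[K^(h−1)_{ii}, K^(h−1)_{ij}],[K^(h−1)_{ji}, K^(h−1)_{jj}]]): K^(h)_{ij} = K^(h−1)_{ij} + E[ρ^(h)(u) b^(h−1)_j + b^(h−1)_i ρ^(h)(v) + ρ^(h)(u) ρ^(h)(v)] and b^(h)_i = b^(h−1)_i + E[ρ^(h)(u)], where each ρ^(h): ℝ → ℝ is Lipschitz (so all expectations are finite) and the 2×2 covariance matrices above are positive semidefinite at every level (which holds inductively). Then for every H, min_{i,j} λ_min([[K^(H)_{ii}, K^(H)_{ij}],[K^(H)_{ji}, K^(H)_{jj}]]) ≥ min_{i,j} λ_min([[K^(0)_{ii}, K^(0)_{ij}],[K^(0)_{ji}, K^(0)_{jj}]]). -/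

import Mathlib

/-!
Write `G^(h) = K^(h) - b^(h) b^(h)ᵀ`. Expanding one step of the recursion, the cross terms
`ρ(u) b_j + b_i ρ(v)` cancel against those of `b^(h) b^(h)ᵀ`, leaving
`G^(h+1)_{ij} = G^(h)_{ij} + Cov(ρ(u), ρ(v))` with `(u, v) ∼ N(0, K^(h)_{[ij]})`. On a `2 × 2`
block the quadratic form of this covariance term at `(a, c)` is `Var(a ρ(u) + c ρ(v)) ≥ 0`, so
every `2 × 2` quadratic form of `G^(H)` dominates that of `K^(0)`, and that of
`K^(H) = G^(H) + b bᵀ` dominates that of `G^(H)`. Least eigenvalues, being infima of these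
forms over the unit circle, are therefore monotone.

The Gaussian expectations are computed coordinatewise: with `S = √A`, the coordinate
`(S z)_k` of a standard Gaussian `z` is the linear functional `z ↦ S_k ⬝ z`, whose law is
`N(0, |S_k|²) = N(0, A_kk)`.
-/

open MeasureTheory ProbabilityTheory Matrix
open scoped NNReal

noncomputable section

/-- Euclidean (`ℓ²`) norm of a finitely indexed real vector. -/
def l2norm {ι : Type*} [Fintype ι] (v : ι → ℝ) : ℝ :=
  Real.sqrt (∑ i, v i ^ 2)

/-- Frobenius norm of a matrix. -/
def frobNorm {ι κ : Type*} [Fintype ι] [Fintype κ] (M : Matrix ι κ ℝ) : ℝ :=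
  Real.sqrt (∑ i, ∑ j, M i j ^ 2)

/-- Operator (spectral) norm of a matrix. -/
def opNorm {ι κ : Type*} [Fintype ι] [Fintype κ] (M : Matrix ι κ ℝ) : ℝ :=
  sSup {r | ∃ v : κ → ℝ, (∑ j, v j ^ 2) ≤ 1 ∧ r = Real.sqrt (∑ i, (∑ j, M i j * v j) ^ 2)}

/-- Smallest eigenvalue of a (symmetric) matrix, as the infimum of the Rayleigh
quotient over the unit sphere. -/
def lambdaMin {ι : Type*} [Fintype ι] (M : Matrix ι ι ℝ) : ℝ :=
  sInf {r | ∃ v : ι → ℝ, (∑ i, v i ^ 2) = 1 ∧ r = ∑ i, ∑ j, v i * M i j * v j}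

/-- The standard Gaussian measure on `ι → ℝ`. -/
def stdGaussianPi (ι : Type*) [Fintype ι] : Measure (ι → ℝ) :=
  Measure.pi fun _ => gaussianReal 0 1

/-- PSD square root of a matrix (with junk value `0` off the PSD cone). -/
def matSqrt {ι : Type*} [Fintype ι] [DecidableEq ι] (A : Matrix ι ι ℝ) : Matrix ι ι ℝ :=
  open scoped Classical in
  if h : A.PosSemidef then
    (h.1.eigenvectorUnitary : Matrix ι ι ℝ) * diagonal (fun i => Real.sqrt (h.1.eigenvalues i)) *
      (star h.1.eigenvectorUnitary : Matrix ι ι ℝ)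
  else 0

/-- Expectation of `f u` for `u ∼ N(0, A)` a centered Gaussian vector with covariance `A`. -/
def gaussExpVec {ι : Type*} [Fintype ι] [DecidableEq ι]
    (A : Matrix ι ι ℝ) (f : (ι → ℝ) → ℝ) : ℝ :=
  ∫ z, f ((matSqrt A).mulVec z) ∂(stdGaussianPi ι)

/-- Expectation of `f u v` for `(u,v) ∼ N(0, A)`, `A` a `2 × 2` covariance matrix. -/
def gaussExp2 (A : Matrix (Fin 2) (Fin 2) ℝ) (f : ℝ → ℝ → ℝ) : ℝ :=
  gaussExpVec A fun z => f (z 0) (z 1)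

/-- Expectation of `f u` for a centered scalar Gaussian `u` with variance `v`. -/
def gaussExp1 (v : ℝ) (f : ℝ → ℝ) : ℝ :=
  ∫ z, f (Real.sqrt v * z) ∂(gaussianReal 0 1)

/-- The normalization constant `c_σ = (E_{z ∼ N(0,1)} σ(z)²)⁻¹`. -/
def cSig (σ : ℝ → ℝ) : ℝ :=
  (∫ z, (σ z) ^ 2 ∂(gaussianReal 0 1))⁻¹

/-- Condition 3.1: `σ` is Lipschitz and smooth (its derivative is Lipschitz),
with `|σ(0)|` bounded by the same constant. -/
def Condition31 (σ : ℝ → ℝ) : Prop :=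
  Differentiable ℝ σ ∧
    ∃ c : ℝ≥0, 0 < c ∧ |σ 0| ≤ c ∧ LipschitzWith c σ ∧ LipschitzWith c (deriv σ)

/-- Condition 3.2: `σ` is analytic and is not a polynomial. -/
def Condition32 (σ : ℝ → ℝ) : Prop :=
  (∀ x : ℝ, AnalyticAt ℝ σ x) ∧ ¬ ∃ P : Polynomial ℝ, ∀ x, σ x = P.eval x

/-- The `2 × 2` submatrix of `K` with rows/columns `i, j`. -/
def cov2 {n : ℕ} (K : Matrix (Fin n) (Fin n) ℝ) (i j : Fin n) : Matrix (Fin 2) (Fin 2) ℝ :=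
  !![K i i, K i j; K j i, K j j]

/-- Geometric series `g_α(j) = ∑_{i=0}^{j-1} α^i`. -/
def gSeries (α : ℝ) (j : ℕ) : ℝ :=
  ∑ i ∈ Finset.range j, α ^ i

/-- The data points are pairwise non-parallel: `x i ∉ span (x j)` for `i ≠ j`. -/
def Nonparallel {n d : ℕ} (x : Fin n → Fin d → ℝ) : Prop :=
  ∀ i j, i ≠ j → ∀ c : ℝ, x i ≠ c • x j

end
noncomputable section

/-- The recursively defined kernels `(K^(h), b^(h))` with identity skip connection
(ResNet architecture, scalar outputs): `K^(0)` given, `b^(0) = 0`, and for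
`(u,v) ∼ N(0, [[K^(h−1)_{ii}, K^(h−1)_{ij}],[K^(h−1)_{ji}, K^(h−1)_{jj}]])`:
`K^(h)_{ij} = K^(h−1)_{ij} + E[ρ^(h)(u) b^(h−1)_j + b^(h−1)_i ρ^(h)(v) + ρ^(h)(u)ρ^(h)(v)]`
and `b^(h)_i = b^(h−1)_i + E[ρ^(h)(u)]`. -/
def skipKer (ρ : ℕ → ℝ → ℝ) {n : ℕ} (K0 : Matrix (Fin n) (Fin n) ℝ) :
    ℕ → Matrix (Fin n) (Fin n) ℝ × (Fin n → ℝ)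
  | 0 => (K0, fun _ => 0)
  | h + 1 =>
      (Matrix.of fun i j =>
        (skipKer ρ K0 h).1 i j +
          gaussExp2 (cov2 (skipKer ρ K0 h).1 i j) fun u v =>
            ρ (h + 1) u * (skipKer ρ K0 h).2 j + (skipKer ρ K0 h).2 i * ρ (h + 1) v +
              ρ (h + 1) u * ρ (h + 1) v,
       fun i => (skipKer ρ K0 h).2 i + gaussExp1 ((skipKer ρ K0 h).1 i i) (ρ (h + 1)))

open scoped MatrixOrder

lemma sq_integral_le_integral_sq {Ω : Type*} {mΩ : MeasurableSpace Ω} {μ : Measure Ω}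
    [IsProbabilityMeasure μ] {X : Ω → ℝ} (hX : MemLp X 2 μ) :
    (∫ ω, X ω ∂μ) ^ 2 ≤ ∫ ω, X ω ^ 2 ∂μ := by
  have h := variance_nonneg X μ
  rw [variance_eq_sub hX] at h
  simpa using h

lemma LipschitzWith.memLp_gaussianReal {L : ℝ≥0} {ρ : ℝ → ℝ} (hρ : LipschitzWith L ρ)
    (p : ℝ≥0) (m : ℝ) (v : ℝ≥0) : MemLp ρ p (gaussianReal m v) := by
  have h := ((hρ.sub (LipschitzWith.const (ρ 0))).comp_memLp (by simp)
    (memLp_id_gaussianReal (μ := m) (v := v) p)).add (memLp_const (ρ 0))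
  convert h using 1
  ext x; simp

lemma lambdaMin_mono {ι : Type*} [Fintype ι] [Nonempty ι] {M N : Matrix ι ι ℝ}
    (h : ∀ v, v ⬝ᵥ M *ᵥ v ≤ v ⬝ᵥ N *ᵥ v) : lambdaMin M ≤ lambdaMin N := by
  have hquad (P : Matrix ι ι ℝ) (v : ι → ℝ) : ∑ i, ∑ j, v i * P i j * v j = v ⬝ᵥ P *ᵥ v := by
    simp [dotProduct, mulVec, Finset.mul_sum, mul_assoc]
  have hsphere : IsCompact {v : ι → ℝ | ∑ i, v i ^ 2 = 1} := by
    refine Metric.isCompact_of_isClosed_isBounded (isClosed_eq (by fun_prop) continuous_const)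
      ((Metric.isBounded_closedBall (x := 0) (r := 1)).subset fun v hv => ?_)
    refine mem_closedBall_zero_iff.2 ((pi_norm_le_iff_of_nonneg zero_le_one).2 fun i => ?_)
    rw [Real.norm_eq_abs, ← sq_le_one_iff_abs_le_one, ← hv.out]
    exact Finset.single_le_sum (fun j _ => sq_nonneg (v j)) (Finset.mem_univ i)
  have hbdd : BddBelow {r | ∃ v : ι → ℝ, ∑ i, v i ^ 2 = 1 ∧ r = ∑ i, ∑ j, v i * M i j * v j} :=
    (hsphere.bddBelow_image (f := fun v => ∑ i, ∑ j, v i * M i j * v j)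
      (by fun_prop)).mono (by rintro _ ⟨v, hv, rfl⟩; exact ⟨v, hv, rfl⟩)
  classical
  obtain ⟨i₀⟩ := ‹Nonempty ι›
  refine le_csInf ⟨_, ⟨Pi.single i₀ 1, by simp [Pi.single_apply], rfl⟩⟩ ?_
  rintro _ ⟨v, hv, rfl⟩
  calc lambdaMin M ≤ ∑ i, ∑ j, v i * M i j * v j := csInf_le hbdd ⟨v, hv, rfl⟩
    _ ≤ _ := by rw [hquad, hquad]; exact h v

lemma gaussExp1_eq_integral {v : ℝ} (hv : 0 ≤ v) {f : ℝ → ℝ} (hf : Measurable f) :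
    gaussExp1 v f = ∫ x, f x ∂gaussianReal 0 v.toNNReal := by
  have hmap : (gaussianReal 0 1).map (√v * ·) = gaussianReal 0 v.toNNReal := by
    rw [gaussianReal_map_const_mul]
    congr 1
    · simp
    · ext; simp [Real.sq_sqrt hv, hv]
  rw [gaussExp1, ← hmap, integral_map (by fun_prop) hf.aestronglyMeasurable]

section MatSqrt

variable {ι : Type*} [Fintype ι]

instance isProbabilityMeasure_stdGaussianPi : IsProbabilityMeasure (stdGaussianPi ι) := by
  unfold stdGaussianPi; infer_instance

lemma map_dotProduct_stdGaussianPi (w : ι → ℝ) :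
    (stdGaussianPi ι).map (w ⬝ᵥ ·) = gaussianReal 0 (w ⬝ᵥ w).toNNReal := by
  let L : StrongDual ℝ (EuclideanSpace ℝ ι) := innerSL ℝ (WithLp.toLp 2 w)
  have hL : (w ⬝ᵥ ·) = L ∘ WithLp.toLp 2 := by
    ext z; simp [L, dotProduct, PiLp.inner_apply, mul_comm]
  rw [hL, ← Measure.map_map L.continuous.measurable (by fun_prop), stdGaussianPi,
    map_pi_eq_stdGaussian, IsGaussian.map_eq_gaussianReal, integral_strongDual_stdGaussian,
    variance_dual_stdGaussian, innerSL_apply_norm, EuclideanSpace.real_norm_sq_eq]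
  simp [dotProduct, sq]

lemma measurePreserving_mulVec_apply (S : Matrix ι ι ℝ) (k : ι) :
    MeasurePreserving (fun z => (S *ᵥ z) k) (stdGaussianPi ι)
      (gaussianReal 0 ((S * Sᵀ) k k).toNNReal) :=
  ⟨by fun_prop, map_dotProduct_stdGaussianPi (S k)⟩

variable [DecidableEq ι] {A : Matrix ι ι ℝ}

lemma matSqrt_eq_cfcSqrt (hA : A.PosSemidef) : matSqrt A = CFC.sqrt A := by
  rw [CFC.sqrt_eq_real_sqrt A hA.nonneg, cfcₙ_eq_cfc, hA.1.cfc_eq, matSqrt, dif_pos hA]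
  rfl

lemma matSqrt_mul_transpose (hA : A.PosSemidef) : matSqrt A * (matSqrt A)ᵀ = A := by
  rw [matSqrt_eq_cfcSqrt hA, ← conjTranspose_eq_transpose_of_trivial, ← star_eq_conjTranspose,
    (IsSelfAdjoint.of_nonneg (CFC.sqrt_nonneg A)).star_eq, CFC.sqrt_mul_sqrt_self A hA.nonneg]

lemma matSqrt_row_eq (hA : A.PosSemidef) {i j : ι} (h : A i i + A j j = A i j + A j i) :
    matSqrt A i = matSqrt A j := by
  have hrow (p q : ι) : matSqrt A p ⬝ᵥ matSqrt A q = A p q := by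
    conv_rhs => rw [← matSqrt_mul_transpose hA]
    rfl
  rw [← sub_eq_zero, ← dotProduct_self_eq_zero, sub_dotProduct, dotProduct_sub, dotProduct_sub,
    hrow, hrow, hrow, hrow]
  linarith

lemma measurePreserving_matSqrt_mulVec_apply (hA : A.PosSemidef) (k : ι) :
    MeasurePreserving (fun z => (matSqrt A *ᵥ z) k) (stdGaussianPi ι)
      (gaussianReal 0 (A k k).toNNReal) := by
  simpa [matSqrt_mul_transpose hA] using measurePreserving_mulVec_apply (matSqrt A) k

lemma integral_matSqrt_mulVec_apply (hA : A.PosSemidef) (k : ι) {g : ℝ → ℝ}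
    (hg : Measurable g) :
    ∫ z, g ((matSqrt A *ᵥ z) k) ∂stdGaussianPi ι = gaussExp1 (A k k) g := by
  have hk := measurePreserving_matSqrt_mulVec_apply hA k
  rw [gaussExp1_eq_integral hA.diag_nonneg hg, ← hk.map_eq,
    integral_map hk.aemeasurable hg.aestronglyMeasurable]

end MatSqrt

def gaussCov (A : Matrix (Fin 2) (Fin 2) ℝ) (ρ : ℝ → ℝ) : ℝ :=
  gaussExp2 A (fun x y => ρ x * ρ y) - gaussExp1 (A 0 0) ρ * gaussExp1 (A 1 1) ρ

lemma gaussExp2_eq_gaussExp1_diag {A : Matrix (Fin 2) (Fin 2) ℝ} (hA : A.PosSemidef)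
    (h : A 0 0 + A 1 1 = A 0 1 + A 1 0) {f : ℝ → ℝ → ℝ} (hf : Measurable fun x => f x x) :
    gaussExp2 A f = gaussExp1 (A 0 0) (fun x => f x x) := by
  have hrow (z : Fin 2 → ℝ) : (matSqrt A *ᵥ z) 1 = (matSqrt A *ᵥ z) 0 :=
    congrArg (· ⬝ᵥ z) (matSqrt_row_eq hA (by linarith))
  simp_rw [gaussExp2, gaussExpVec, hrow]
  exact integral_matSqrt_mulVec_apply hA 0 hf

section Bivariate

variable {A : Matrix (Fin 2) (Fin 2) ℝ} (hA : A.PosSemidef) {L : ℝ≥0} {ρ : ℝ → ℝ}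
  (hρ : LipschitzWith L ρ)
include hA hρ

lemma memLp_comp_matSqrt_mulVec_apply (k : Fin 2) :
    MemLp (fun z => ρ ((matSqrt A *ᵥ z) k)) 2 (stdGaussianPi (Fin 2)) :=
  (hρ.memLp_gaussianReal 2 _ _).comp_measurePreserving
    (measurePreserving_matSqrt_mulVec_apply hA k)

lemma integrable_comp_matSqrt_mulVec_apply (k : Fin 2) :
    Integrable (fun z => ρ ((matSqrt A *ᵥ z) k)) (stdGaussianPi (Fin 2)) :=
  (memLp_comp_matSqrt_mulVec_apply hA hρ k).integrable one_le_two

lemma integrable_comp_matSqrt_mulVec_mul :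
    Integrable (fun z => ρ ((matSqrt A *ᵥ z) 0) * ρ ((matSqrt A *ᵥ z) 1))
      (stdGaussianPi (Fin 2)) :=
  (memLp_comp_matSqrt_mulVec_apply hA hρ 0).integrable_mul
    (memLp_comp_matSqrt_mulVec_apply hA hρ 1)

lemma gaussExp2_affine (α β : ℝ) :
    gaussExp2 A (fun x y => ρ x * α + β * ρ y + ρ x * ρ y) =
      α * gaussExp1 (A 0 0) ρ + β * gaussExp1 (A 1 1) ρ +
        gaussExp2 A (fun x y => ρ x * ρ y) := by
  have hU := integrable_comp_matSqrt_mulVec_apply hA hρ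
  have hm := hρ.continuous.measurable
  rw [gaussExp2, gaussExpVec, integral_add (((hU 0).mul_const α).fun_add ((hU 1).const_mul β))
      (integrable_comp_matSqrt_mulVec_mul hA hρ),
    integral_add ((hU 0).mul_const α) ((hU 1).const_mul β),
    integral_mul_const, integral_const_mul, integral_matSqrt_mulVec_apply hA 0 hm,
    integral_matSqrt_mulVec_apply hA 1 hm, mul_comm _ α]
  rfl

lemma gaussCov_quadratic_nonneg (a c : ℝ) :
    0 ≤ a ^ 2 * (gaussExp1 (A 0 0) (ρ · ^ 2) - gaussExp1 (A 0 0) ρ ^ 2) +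
      2 * a * c * gaussCov A ρ +
        c ^ 2 * (gaussExp1 (A 1 1) (ρ · ^ 2) - gaussExp1 (A 1 1) ρ ^ 2) := by
  have hU := memLp_comp_matSqrt_mulVec_apply hA hρ
  have hU₁ := integrable_comp_matSqrt_mulVec_apply hA hρ
  have hU₂ (k : Fin 2) := (hU k).integrable_sq
  have hUV := integrable_comp_matSqrt_mulVec_mul hA hρ
  have hm := hρ.continuous.measurable
  have hJensen := sq_integral_le_integral_sq (((hU 0).const_mul a).add ((hU 1).const_mul c))
  have hmean :
      ∫ z, (a * ρ ((matSqrt A *ᵥ z) 0) + c * ρ ((matSqrt A *ᵥ z) 1)) ∂stdGaussianPi (Fin 2) =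
        a * gaussExp1 (A 0 0) ρ + c * gaussExp1 (A 1 1) ρ := by
    rw [integral_add ((hU₁ 0).const_mul a) ((hU₁ 1).const_mul c), integral_const_mul,
      integral_const_mul, integral_matSqrt_mulVec_apply hA 0 hm,
      integral_matSqrt_mulVec_apply hA 1 hm]
  have hsecond :
      ∫ z, (a * ρ ((matSqrt A *ᵥ z) 0) + c * ρ ((matSqrt A *ᵥ z) 1)) ^ 2 ∂stdGaussianPi (Fin 2) =
        a ^ 2 * gaussExp1 (A 0 0) (ρ · ^ 2) + 2 * a * c * gaussExp2 A (fun x y => ρ x * ρ y) +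
          c ^ 2 * gaussExp1 (A 1 1) (ρ · ^ 2) := by
    have hexpand (x y : ℝ) :
        (a * x + c * y) ^ 2 = a ^ 2 * x ^ 2 + 2 * a * c * (x * y) + c ^ 2 * y ^ 2 := by ring
    simp_rw [hexpand]
    rw [integral_add (((hU₂ 0).const_mul _).fun_add (hUV.const_mul _)) ((hU₂ 1).const_mul _),
      integral_add ((hU₂ 0).const_mul _) (hUV.const_mul _), integral_const_mul,
      integral_const_mul, integral_const_mul,
      integral_matSqrt_mulVec_apply hA 0 (hm.pow_const 2),
      integral_matSqrt_mulVec_apply hA 1 (hm.pow_const 2)]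
    rfl
  simp only [Pi.add_apply] at hJensen
  rw [hmean, hsecond] at hJensen
  unfold gaussCov
  linear_combination hJensen

end Bivariate

section Kernel

variable {n : ℕ}

@[simp]
lemma cov2_apply_zero_zero (M : Matrix (Fin n) (Fin n) ℝ) (i j : Fin n) :
    cov2 M i j 0 0 = M i i :=
  rfl

@[simp]
lemma cov2_apply_one_one (M : Matrix (Fin n) (Fin n) ℝ) (i j : Fin n) :
    cov2 M i j 1 1 = M j j :=
  rfl

lemma cov2_add (M N : Matrix (Fin n) (Fin n) ℝ) (i j : Fin n) :
    cov2 (M + N) i j = cov2 M i j + cov2 N i j := by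
  ext p q; fin_cases p <;> fin_cases q <;> rfl

lemma dotProduct_cov2_mulVec (M : Matrix (Fin n) (Fin n) ℝ) (i j : Fin n) (v : Fin 2 → ℝ) :
    v ⬝ᵥ cov2 M i j *ᵥ v = v 0 ^ 2 * M i i + v 0 * v 1 * (M i j + M j i) + v 1 ^ 2 * M j j := by
  simp only [dotProduct, mulVec, cov2, of_apply, cons_val', cons_val_fin_one, Fin.sum_univ_two,
    cons_val_zero, cons_val_one]
  ring

lemma dotProduct_cov2_sub_vecMulVec_mulVec_le (K : Matrix (Fin n) (Fin n) ℝ) (b : Fin n → ℝ)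
    (i j : Fin n) (v : Fin 2 → ℝ) :
    v ⬝ᵥ cov2 (K - vecMulVec b b) i j *ᵥ v ≤ v ⬝ᵥ cov2 K i j *ᵥ v := by
  rw [dotProduct_cov2_mulVec, dotProduct_cov2_mulVec]
  simp only [Matrix.sub_apply, vecMulVec_apply]
  nlinarith [sq_nonneg (v 0 * b i + v 1 * b j)]

lemma gaussCov_cov2_self {ρ : ℝ → ℝ} (hρ : Measurable ρ) {K : Matrix (Fin n) (Fin n) ℝ}
    {i : Fin n} (hK : (cov2 K i i).PosSemidef) :
    gaussCov (cov2 K i i) ρ = gaussExp1 (K i i) (ρ · ^ 2) - gaussExp1 (K i i) ρ ^ 2 := by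
  rw [gaussCov, gaussExp2_eq_gaussExp1_diag hK rfl (by fun_prop)]
  simp only [sq]
  rfl

/- Only the sum of the `(i, j)` and `(j, i)` entries enters the quadratic form; it is controlled
by averaging the variance inequalities of the blocks `(i, j)` and `(j, i)`. -/
lemma dotProduct_cov2_gaussCov_mulVec_nonneg {L : ℝ≥0} {ρ : ℝ → ℝ} (hρ : LipschitzWith L ρ)
    {K : Matrix (Fin n) (Fin n) ℝ} (hK : ∀ i j, (cov2 K i j).PosSemidef) (i j : Fin n)
    (v : Fin 2 → ℝ) :
    0 ≤ v ⬝ᵥ cov2 (of fun i j => gaussCov (cov2 K i j) ρ) i j *ᵥ v := by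
  have hij := gaussCov_quadratic_nonneg (hK i j) hρ (v 0) (v 1)
  have hji := gaussCov_quadratic_nonneg (hK j i) hρ (v 1) (v 0)
  rw [dotProduct_cov2_mulVec]
  simp only [of_apply, gaussCov_cov2_self hρ.continuous.measurable (hK _ _)]
  simp only [cov2_apply_zero_zero, cov2_apply_one_one] at hij hji
  linear_combination (hij + hji) / 2

end Kernel

def skipKerCentered (ρ : ℕ → ℝ → ℝ) {n : ℕ} (K0 : Matrix (Fin n) (Fin n) ℝ) (h : ℕ) :
    Matrix (Fin n) (Fin n) ℝ :=
  (skipKer ρ K0 h).1 - vecMulVec (skipKer ρ K0 h).2 (skipKer ρ K0 h).2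

section SkipKer

variable {ρ : ℕ → ℝ → ℝ} {n : ℕ} {K0 : Matrix (Fin n) (Fin n) ℝ}

lemma skipKerCentered_zero : skipKerCentered ρ K0 0 = K0 := by
  ext i j
  simp [skipKerCentered, skipKer, vecMulVec_apply]

lemma skipKerCentered_succ {h : ℕ} {L : ℝ≥0} (hρ : LipschitzWith L (ρ (h + 1)))
    (hK : ∀ i j, (cov2 (skipKer ρ K0 h).1 i j).PosSemidef) :
    skipKerCentered ρ K0 (h + 1) =
      skipKerCentered ρ K0 h +
        of fun i j => gaussCov (cov2 (skipKer ρ K0 h).1 i j) (ρ (h + 1)) := by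
  ext i j
  simp only [skipKerCentered, skipKer, Matrix.sub_apply, Matrix.add_apply, of_apply,
    vecMulVec_apply]
  rw [gaussExp2_affine (hK i j) hρ, gaussCov, cov2_apply_zero_zero, cov2_apply_one_one]
  ring

lemma dotProduct_cov2_mulVec_le_skipKerCentered
    (hlip : ∀ h, ∃ L : ℝ≥0, LipschitzWith L (ρ h))
    (hpsd : ∀ (h : ℕ) (i j : Fin n), (cov2 (skipKer ρ K0 h).1 i j).PosSemidef)
    (H : ℕ) (i j : Fin n) (v : Fin 2 → ℝ) :
    v ⬝ᵥ cov2 K0 i j *ᵥ v ≤ v ⬝ᵥ cov2 (skipKerCentered ρ K0 H) i j *ᵥ v := by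
  induction H with
  | zero => rw [skipKerCentered_zero]
  | succ h ih =>
    obtain ⟨L, hL⟩ := hlip (h + 1)
    rw [skipKerCentered_succ hL (hpsd h), cov2_add, add_mulVec, dotProduct_add]
    linarith [dotProduct_cov2_gaussCov_mulVec_nonneg hL (hpsd h) i j v]

end SkipKer

/-- **Lemma E.5**: for the identity-skip-connection kernel recursion with Lipschitz
activations `ρ^(h)` and positive semidefinite `2×2` covariance blocks at every level,
the minimum over pairs `(i,j)` of the least eigenvalue of the `2×2` block of `K^(H)`
is at least the corresponding quantity for `K^(0)`. -/
theorem skip_connection_kernel_least_eigenvalue_monotone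
    (n : ℕ) (K0 : Matrix (Fin n) (Fin n) ℝ) (ρ : ℕ → ℝ → ℝ)
    (hlip : ∀ h, ∃ L : ℝ≥0, LipschitzWith L (ρ h))
    (hpsd : ∀ (h : ℕ) (i j : Fin n), (cov2 (skipKer ρ K0 h).1 i j).PosSemidef)
    (H : ℕ) :
    (⨅ i : Fin n, ⨅ j : Fin n, lambdaMin (cov2 K0 i j)) ≤
      ⨅ i : Fin n, ⨅ j : Fin n, lambdaMin (cov2 (skipKer ρ K0 H).1 i j) := by
  refine ciInf_mono (Set.finite_range _).bddBelow fun i =>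
    ciInf_mono (Set.finite_range _).bddBelow fun j => lambdaMin_mono fun v => ?_
  exact (dotProduct_cov2_mulVec_le_skipKerCentered hlip hpsd H i j v).trans
    (dotProduct_cov2_sub_vecMulVec_mulVec_le _ _ i j v)

end
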